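/- arXiv:1907.02738 — 4 statements merged into one kernel-verified Lean document; each statement's English description precedes it below -/
import Mathlib

section
/- Let R = (R,≤,⊙,→,⇝,‾,˜,0,1) be an unsharp residuated poset and define x + y := (x̄⊙ȳ)˜ (defined iff x ≤ ȳ), making (R,+,‾,˜,0,1) a pseudoeffect algebra. Then the induced order of this pseudoeffect algebra (a ≤ₚ b iff there exists z with a+z = b) coincides with the order ≤ of R. -/
namespace Paper

variable {E : Type*}

/-- The lower cone `L(S)` of a subset w.r.t. an order relation. -/
def lcone (le : E → E → Prop) (S : Set E) : Set E := {x | ∀ y ∈ S, le x y}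

/-- The upper cone `U(S)` of a subset w.r.t. an order relation. -/
def ucone (le : E → E → Prop) (S : Set E) : Set E := {x | ∀ y ∈ S, le y x}

/-- `S ≤ T` for subsets: every element of `S` is below every element of `T`. -/
def setLE (le : E → E → Prop) (S T : Set E) : Prop := ∀ x ∈ S, ∀ y ∈ T, le x y

/-- Effect algebra axioms (E1)-(E4); the partial operation `+` is encoded via `Option`
(`add x y = some z` means `x + y` is defined with value `z`). -/
structure IsEffectAlgebra (add : E → E → Option E) (compl : E → E)
    (zero one : E) : Prop where
  /-- (E1) -/
  comm : ∀ x y, add x y = add y x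
  /-- (E2) -/
  assoc : ∀ x y z, (add x y).bind (fun u => add u z) = (add y z).bind (fun v => add x v)
  /-- (E3): `x'` is the unique `u` with `x + u = 1`. -/
  compl_iff : ∀ x u, add x u = some one ↔ u = compl x
  /-- (E4) -/
  one_add : ∀ x y, add one x = some y → x = zero

/-- The induced order: `x ≤ y` iff there is `z` with `x + z = y`. -/
def eaLe (add : E → E → Option E) (x y : E) : Prop := ∃ z, add x z = some y

/-- `x + A := {x + a : a ∈ A}`. -/
def addLSet (add : E → E → Option E) (x : E) (S : Set E) : Set E :=
  {z | ∃ a ∈ S, add x a = some z}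

/-- `A + x := {a + x : a ∈ A}`. -/
def addRSet (add : E → E → Option E) (S : Set E) (x : E) : Set E :=
  {z | ∃ a ∈ S, add a x = some z}

/-- A monotonous effect algebra: for every `x` and nonempty `A`, `B`, if `A ∪ B ≤ x'`
and `L(A) ≤ U(B)`, then `L(x + A) ≤ U(x + B)`. -/
def Monotonous (add : E → E → Option E) (compl : E → E) : Prop :=
  ∀ (x : E) (A B : Set E), A.Nonempty → B.Nonempty →
    (∀ a ∈ A ∪ B, eaLe add a (compl x)) →
    setLE (eaLe add) (lcone (eaLe add) A) (ucone (eaLe add) B) →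
    setLE (eaLe add) (lcone (eaLe add) (addLSet add x A)) (ucone (eaLe add) (addLSet add x B))

/-- The multiplication `x ⊙ y := (x' + y')'` derived from an effect algebra
(defined iff `x' + y'` is, i.e. iff `x' ≤ y`). -/
def eaOdot (add : E → E → Option E) (compl : E → E) (x y : E) : Option E :=
  (add (compl x) (compl y)).map compl

/-- The implication `x → y := x' + L(x,y)` derived from an effect algebra. -/
def eaImp (add : E → E → Option E) (compl : E → E) (x y : E) : Set E :=
  addLSet add (compl x) (lcone (eaLe add) {x, y})

/-- `S ⊙ y := {s ⊙ y : s ∈ S}`. -/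
def odotLSet (odot : E → E → Option E) (S : Set E) (y : E) : Set E :=
  {w | ∃ s ∈ S, odot s y = some w}

/-- `y ⊙ S := {y ⊙ s : s ∈ S}`. -/
def odotRSet (odot : E → E → Option E) (y : E) (S : Set E) : Set E :=
  {w | ∃ s ∈ S, odot y s = some w}

/-- Commutative unsharp residuated poset, axioms (C1)-(C4); `⊙` is a partial
operation encoded via `Option` and `→` maps pairs to subsets. -/
structure IsCURP (le : E → E → Prop) (odot : E → E → Option E) (imp : E → E → Set E)
    (compl : E → E) (zero one : E) : Prop where
  /-- (C1): bounded poset … -/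
  le_refl : ∀ x, le x x
  le_antisymm : ∀ x y, le x y → le y x → x = y
  le_trans : ∀ x y z, le x y → le y z → le x z
  zero_le : ∀ x, le zero x
  le_one : ∀ x, le x one
  /-- (C1): … with an antitone involution. -/
  compl_compl : ∀ x, compl (compl x) = x
  compl_antitone : ∀ x y, le x y → le (compl y) (compl x)
  /-- (C2): `x ⊙ y` is defined iff `x' ≤ y`. -/
  odot_defined : ∀ x y, (odot x y).isSome ↔ le (compl x) y
  /-- (C2): partial commutative monoid. -/
  odot_comm : ∀ x y, odot x y = odot y x
  odot_assoc : ∀ x y z, (odot x y).bind (fun u => odot u z) = (odot y z).bind (fun v => odot x v)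
  odot_one : ∀ x, odot x one = some x
  one_odot : ∀ x, odot one x = some x
  /-- (C2): `z' ≤ x ≤ y` implies `x ⊙ z ≤ y ⊙ z`. -/
  odot_mono : ∀ x y z a b, le (compl z) x → le x y →
    odot x z = some a → odot y z = some b → le a b
  /-- (C3): unsharp adjointness. -/
  adjoint : ∀ x y z,
    setLE le (lcone le (odotLSet odot (ucone le {x, compl y}) y))
      (ucone le (lcone le {y, z})) ↔
    setLE le (lcone le (ucone le {x, compl y})) (ucone le (imp y z))
  /-- (C4) -/
  imp_zero : ∀ x, imp x zero = {compl x}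

/-- Divisibility: `x ≤ y` implies `y ⊙ (y → x) = L(x)`. -/
def CURPDivisible (le : E → E → Prop) (odot : E → E → Option E)
    (imp : E → E → Set E) : Prop :=
  ∀ x y, le x y → odotRSet odot y (imp y x) = lcone le {x}

/-- Pseudoeffect algebra axioms (P1)-(P4); `x̄ = lc x`, `x̃ = rc x`. -/
structure IsPEA (add : E → E → Option E) (lc rc : E → E) (zero one : E) : Prop where
  /-- (P1): if `x + y` is defined then `u + x = x + y` for some `u` … -/
  exists_left : ∀ x y z, add x y = some z → ∃ u, add u x = some z
  /-- (P1): … and `y + w = x + y` for some `w`. -/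
  exists_right : ∀ x y z, add x y = some z → ∃ w, add y w = some z
  /-- (P2) -/
  assoc : ∀ x y z, (add x y).bind (fun u => add u z) = (add y z).bind (fun v => add x v)
  /-- (P3): `x̄` is the unique `u` with `u + x = 1`. -/
  lc_iff : ∀ x u, add u x = some one ↔ u = lc x
  /-- (P3): `x̃` is the unique `w` with `x + w = 1`. -/
  rc_iff : ∀ x w, add x w = some one ↔ w = rc x
  /-- (P4) -/
  one_add : ∀ x y, add one x = some y → x = zero
  add_one : ∀ x y, add x one = some y → x = zero

/-- A pseudoeffect algebra is good if `(x̄ + ȳ)˜ = (x̃ + ỹ)‾` whenever `x̃ ≤ y`. -/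
def Good (add : E → E → Option E) (lc rc : E → E) : Prop :=
  ∀ x y, eaLe add (rc x) y →
    (add (lc x) (lc y)).map rc = (add (rc x) (rc y)).map lc

/-- A monotonous pseudoeffect algebra. -/
def PEAMonotonous (add : E → E → Option E) (lc rc : E → E) : Prop :=
  (∀ (x : E) (A B : Set E), A.Nonempty → B.Nonempty →
    (∀ a ∈ A ∪ B, eaLe add a (lc x)) →
    setLE (eaLe add) (lcone (eaLe add) A) (ucone (eaLe add) B) →
    setLE (eaLe add) (lcone (eaLe add) (addRSet add A x))
      (ucone (eaLe add) (addRSet add B x))) ∧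
  (∀ (x : E) (A B : Set E), A.Nonempty → B.Nonempty →
    (∀ a ∈ A ∪ B, eaLe add a (rc x)) →
    setLE (eaLe add) (lcone (eaLe add) A) (ucone (eaLe add) B) →
    setLE (eaLe add) (lcone (eaLe add) (addLSet add x A))
      (ucone (eaLe add) (addLSet add x B)))

/-- The multiplication `x ⊙ y := (x̄ + ȳ)˜` derived from a pseudoeffect algebra. -/
def peaOdot (add : E → E → Option E) (lc rc : E → E) (x y : E) : Option E :=
  (add (lc x) (lc y)).map rc

/-- The implication `x → y := x̄ + L(x,y)` derived from a pseudoeffect algebra. -/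
def peaImp (add : E → E → Option E) (lc : E → E) (x y : E) : Set E :=
  {z | ∃ c ∈ lcone (eaLe add) {x, y}, add (lc x) c = some z}

/-- The implication `x ⇝ y := L(x,y) + x̃` derived from a pseudoeffect algebra. -/
def peaImpW (add : E → E → Option E) (rc : E → E) (x y : E) : Set E :=
  {z | ∃ c ∈ lcone (eaLe add) {x, y}, add c (rc x) = some z}

/-- Unsharp residuated poset, axioms (R1)-(R7); `x̄ = lc x`, `x̃ = rc x`. -/
structure IsURP (le : E → E → Prop) (odot : E → E → Option E)
    (imp impW : E → E → Set E) (lc rc : E → E) (zero one : E) : Prop where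
  /-- (R1): bounded poset. -/
  le_refl : ∀ x, le x x
  le_antisymm : ∀ x y, le x y → le y x → x = y
  le_trans : ∀ x y z, le x y → le y z → le x z
  zero_le : ∀ x, le zero x
  le_one : ∀ x, le x one
  /-- (R2) -/
  rc_lc : ∀ x, rc (lc x) = x
  lc_rc : ∀ x, lc (rc x) = x
  lc_antitone : ∀ x y, le x y → le (lc y) (lc x)
  rc_antitone : ∀ x y, le x y → le (rc y) (rc x)
  /-- (R3): `x ⊙ y` is defined iff `x̃ ≤ y`. -/
  odot_defined : ∀ x y, (odot x y).isSome ↔ le (rc x) y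
  /-- (R3): partial monoid. -/
  odot_assoc : ∀ x y z, (odot x y).bind (fun u => odot u z) = (odot y z).bind (fun v => odot x v)
  odot_one : ∀ x, odot x one = some x
  one_odot : ∀ x, odot one x = some x
  /-- (R3): `z̄ ≤ x ≤ y` implies `x ⊙ z ≤ y ⊙ z`. -/
  odot_rmono : ∀ x y z a b, le (lc z) x → le x y →
    odot x z = some a → odot y z = some b → le a b
  /-- (R3): `z̃ ≤ x ≤ y` implies `z ⊙ x ≤ z ⊙ y`. -/
  odot_lmono : ∀ x y z a b, le (rc z) x → le x y →
    odot z x = some a → odot z y = some b → le a b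
  /-- (R4) -/
  adjoint_r : ∀ x y z,
    setLE le (lcone le (odotLSet odot (ucone le {x, lc y}) y))
      (ucone le (lcone le {y, z})) ↔
    setLE le (lcone le (ucone le {x, lc y})) (ucone le (imp y z))
  /-- (R5) -/
  adjoint_l : ∀ x y z,
    setLE le (lcone le (odotRSet odot y (ucone le {x, rc y})))
      (ucone le (lcone le {y, z})) ↔
    setLE le (lcone le (ucone le {x, rc y})) (ucone le (impW y z))
  /-- (R6) -/
  imp_zero : ∀ x, imp x zero = {lc x}
  impW_zero : ∀ x, impW x zero = {rc x}
  /-- (R7) -/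
  compat : ∀ x y, (odot (lc x) (lc y)).map rc = (odot (rc x) (rc y)).map lc

section Aux

variable {le : E → E → Prop} {odot : E → E → Option E}
  {imp impW : E → E → Set E} {lc rc : E → E} {zero one : E}

/-- In an unsharp residuated poset, `y ⊙ ỹ = 0`. -/
theorem urp_odot_rc_eq_zero (h : IsURP le odot imp impW lc rc zero one) (y : E) :
    odot y (rc y) = some zero := by
  obtain ⟨v, hv⟩ := Option.isSome_iff_exists.mp
    ((h.odot_defined y (rc y)).mpr (h.le_refl _))
  -- RHS of adjoint_l with x := zero, z := zero holds:
  have rhs : setLE le (lcone le (ucone le {zero, rc y})) (ucone le (impW y zero)) := by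
    rw [h.impW_zero]
    intro w hw u hu
    refine hw u ?_
    intro m hm
    rcases hm with rfl | hm
    · exact h.zero_le u
    · rcases hm with rfl
      exact hu (rc y) rfl
  have lhs := (h.adjoint_l zero y zero).mpr rhs
  -- v = y ⊙ ỹ is a lower bound of y ⊙ U(0, ỹ)
  have hvlb : v ∈ lcone le (odotRSet odot y (ucone le {zero, rc y})) := by
    rintro m ⟨s, hs, hms⟩
    exact h.odot_lmono (rc y) s y v m (h.le_refl _) (hs (rc y) (Or.inr rfl)) hv hms
  have hzu : zero ∈ ucone le (lcone le {y, zero}) := by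
    intro w hw
    exact hw zero (Or.inr rfl)
  have h0 : le v zero := lhs v hvlb zero hzu
  have : v = zero := h.le_antisymm v zero h0 (h.zero_le v)
  rw [hv, this]

/-- In an unsharp residuated poset, `y ⊙ e = 0` implies `e = ỹ`. -/
theorem urp_eq_rc_of_odot_eq_zero (h : IsURP le odot imp impW lc rc zero one)
    {y e : E} (he : odot y e = some zero) : e = rc y := by
  have hle : le (rc y) e := (h.odot_defined y e).mp (by rw [he]; rfl)
  -- LHS of adjoint_l with x := e, z := zero holds:
  have lhs : setLE le (lcone le (odotRSet odot y (ucone le {e, rc y})))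
      (ucone le (lcone le {y, zero})) := by
    intro v hv u _
    have hmem : zero ∈ odotRSet odot y (ucone le {e, rc y}) := by
      refine ⟨e, ?_, he⟩
      intro m hm
      rcases hm with rfl | hm
      · exact h.le_refl _
      · rcases hm with rfl
        exact hle
    exact h.le_trans v zero u (hv zero hmem) (h.zero_le u)
  have rhs := (h.adjoint_l e y zero).mp lhs
  have he' : e ∈ lcone le (ucone le {e, rc y}) := by
    intro u hu
    exact hu e (Or.inl rfl)
  have hry : rc y ∈ ucone le (impW y zero) := by
    rw [h.impW_zero]
    intro m hm
    rcases hm with rfl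
    exact h.le_refl _
  exact h.le_antisymm e (rc y) (rhs e he' (rc y) hry) hle

end Aux

/-- The induced order of the pseudoeffect algebra obtained from an unsharp
residuated poset coincides with the original order. -/
theorem stmt16 (le : E → E → Prop) (odot : E → E → Option E)
    (imp impW : E → E → Set E) (lc rc : E → E) (zero one : E)
    (h : IsURP le odot imp impW lc rc zero one) :
    ∀ a b : E, eaLe (fun x y => (odot (lc x) (lc y)).map rc) a b ↔ le a b := by
  intro a b
  constructor
  · rintro ⟨z, hz⟩
    obtain ⟨c, hc, hrc⟩ := Option.map_eq_some_iff.mp hz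
    have hdef : le (rc (lc a)) (lc z) := (h.odot_defined _ _).mp (by rw [hc]; rfl)
    -- c = ā ⊙ z̄ ≤ ā ⊙ 1 = ā
    have h1 : le c (lc a) :=
      h.odot_lmono (lc z) one (lc a) c (lc a) hdef (h.le_one _) hc (h.odot_one _)
    have h2 : le (rc (lc a)) (rc c) := h.rc_antitone c (lc a) h1
    rw [h.rc_lc, hrc] at h2
    exact h2
  · intro hab
    have hd : le (rc b) (rc a) := h.rc_antitone a b hab
    obtain ⟨d, hdd⟩ := Option.isSome_iff_exists.mp ((h.odot_defined b (rc a)).mpr hd)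
    -- d = b ⊙ ã ≤ 1 ⊙ ã = ã
    have hda : le d (rc a) := by
      refine h.odot_rmono b one (rc a) d (rc a) ?_ (h.le_one b) hdd (h.one_odot _)
      rw [h.lc_rc]
      exact hab
    have hdef2 : le (rc (rc a)) (rc d) := h.rc_antitone d (rc a) hda
    obtain ⟨e, hee⟩ := Option.isSome_iff_exists.mp
      ((h.odot_defined (rc a) (rc d)).mpr hdef2)
    -- associativity: d ⊙ d̃ = (b ⊙ ã) ⊙ d̃ = b ⊙ (ã ⊙ d̃) = b ⊙ e
    have hassoc := h.odot_assoc b (rc a) (rc d)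
    rw [hdd, hee, Option.bind_some, Option.bind_some] at hassoc
    have hbe : odot b e = some zero := by
      rw [← hassoc]
      exact urp_odot_rc_eq_zero h d
    have heb : e = rc b := urp_eq_rc_of_odot_eq_zero h hbe
    refine ⟨d, ?_⟩
    show (odot (lc a) (lc d)).map rc = some b
    rw [h.compat a d, hee, heb, Option.map_some, h.lc_rc]

end Paper
end

section
/- Let P = (P,+,‾,˜,0,1) be a good monotonous pseudoeffect algebra, let ℝ(P) = (P,≤,⊙,→,⇝,‾,˜,0,1) be the unsharp residuated poset obtained from it (x⊙y := (x̄+ȳ)˜ iff x̃ ≤ y, x→y := x̄ + L(x,y), x⇝y := L(x,y) + x̃), and let ℙ(ℝ(P)) = (P,⊕,‾,˜,0,1) be the pseudoeffect algebra obtained from ℝ(P) (x⊕y := (x̄⊙ȳ)˜ iff x ≤ ȳ). Then ℙ(ℝ(P)) = P, i.e., x⊕y is defined iff x+y is defined and in that case x⊕y = x+y. -/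
namespace Paper

variable {E : Type*}

/-- Theorem 9 of the paper: a good monotonous pseudoeffect algebra is reconstructed
from its assigned unsharp residuated poset, i.e. `ℙ(ℝ(P)) = P`. -/
theorem stmt17 (add : E → E → Option E) (lc rc : E → E) (zero one : E)
    (hP : IsPEA add lc rc zero one) (hG : Good add lc rc)
    (hM : PEAMonotonous add lc rc) :
    ∀ x y : E, (peaOdot add lc rc (lc x) (lc y)).map rc = add x y := by
  have hlc1 : ∀ x, add (lc x) x = some one := fun x => (hP.lc_iff x (lc x)).mpr rfl
  have hrc1 : ∀ x, add x (rc x) = some one := fun x => (hP.rc_iff x (rc x)).mpr rfl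
  have hrclc : ∀ x, rc (lc x) = x := fun x => ((hP.rc_iff (lc x) x).mp (hlc1 x)).symm
  -- if x+y is defined then x ≤ lc y
  have hL6 : ∀ x y z, add x y = some z → eaLe add x (lc y) := by
    intro x y z h
    have ha := hP.assoc (lc z) x y
    rw [h] at ha
    simp only [Option.bind_some, Option.bind_some] at ha
    rw [hlc1 z] at ha
    rcases h1 : add (lc z) x with _ | u
    · rw [h1] at ha; simp at ha
    · rw [h1] at ha
      simp only [Option.bind_some, Option.bind_some] at ha
      have hu : u = lc y := (hP.lc_iff y u).mp ha
      subst hu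
      exact hP.exists_right _ _ _ h1
  -- if x+y is defined then y ≤ rc x
  have hL5 : ∀ x y z, add x y = some z → eaLe add y (rc x) := by
    intro x y z h
    have ha := hP.assoc x y (rc z)
    rw [h] at ha
    simp only [Option.bind_some, Option.bind_some] at ha
    rw [hrc1 z] at ha
    rcases h1 : add y (rc z) with _ | v
    · rw [h1] at ha; simp at ha
    · rw [h1] at ha
      simp only [Option.bind_some, Option.bind_some] at ha
      have hv : v = rc x := (hP.rc_iff x v).mp ha.symm
      subst hv
      exact ⟨rc z, h1⟩
  -- x ≤ lc y implies y ≤ rc x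
  have hL8 : ∀ x y, eaLe add x (lc y) → eaLe add y (rc x) := by
    intro x y ⟨s, hs⟩
    have ha := hP.assoc x s y
    rw [hs] at ha
    simp only [Option.bind_some, Option.bind_some] at ha
    rw [hlc1 y] at ha
    rcases h1 : add s y with _ | v
    · rw [h1] at ha; simp at ha
    · rw [h1] at ha
      simp only [Option.bind_some, Option.bind_some] at ha
      have hv : v = rc x := (hP.rc_iff x v).mp ha.symm
      subst hv
      exact hP.exists_right _ _ _ h1
  -- y ≤ rc x implies x+y defined
  have hL7 : ∀ x y, eaLe add y (rc x) → (add x y).isSome := by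
    intro x y ⟨w, hw⟩
    have ha := hP.assoc x y w
    rw [hw] at ha
    simp only [Option.bind_some, Option.bind_some] at ha
    rw [hrc1 x] at ha
    rcases h1 : add x y with _ | z
    · rw [h1] at ha; simp at ha
    · simp
  -- rc is antitone
  have hL9 : ∀ a b, eaLe add a b → eaLe add (rc b) (rc a) := by
    intro a b ⟨t, ht⟩
    have ha := hP.assoc a t (rc b)
    rw [ht] at ha
    simp only [Option.bind_some, Option.bind_some] at ha
    rw [hrc1 b] at ha
    rcases h1 : add t (rc b) with _ | v
    · rw [h1] at ha; simp at ha
    · rw [h1] at ha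
      simp only [Option.bind_some, Option.bind_some] at ha
      have hv : v = rc a := (hP.rc_iff a v).mp ha.symm
      subst hv
      exact hP.exists_right _ _ _ h1
  intro x y
  show ((add (lc (lc x)) (lc (lc y))).map rc).map rc = add x y
  rcases h : add x y with _ | z
  · -- undefined case: show add (lc² x) (lc² y) = none
    rcases h2 : add (lc (lc x)) (lc (lc y)) with _ | w
    · simp
    · exfalso
      have h3 : eaLe add (lc (lc y)) (rc (lc (lc x))) := hL5 _ _ _ h2
      rw [hrclc] at h3
      have h4 : eaLe add (rc (lc x)) (rc (lc (lc y))) := hL9 _ _ h3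
      rw [hrclc, hrclc] at h4
      have h5 : eaLe add y (rc x) := hL8 _ _ h4
      have h6 := hL7 _ _ h5
      rw [h] at h6
      simp at h6
  · have hle : eaLe add x (lc y) := hL6 _ _ _ h
    have hGood := hG (lc x) (lc y) (by rw [hrclc]; exact hle)
    rw [hrclc, hrclc, h] at hGood
    rw [hGood]
    simp [hrclc]

end Paper
end

section
/- Let R = (R,≤,⊙,→,⇝,‾,˜,0,1) be an unsharp residuated poset. For all a,b ∈ R: (a⊙b is defined and a⊙b = 0) if and only if b = ã; and (a⊙b is defined and a⊙b = 0) if and only if a = b̄. -/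
namespace Paper

variable {E : Type*}

/-- In an unsharp residuated poset, `a ⊙ b` is defined and equals `0` iff `b = ã`,
and likewise iff `a = b̄`. -/
theorem stmt18 (le : E → E → Prop) (odot : E → E → Option E)
    (imp impW : E → E → Set E) (lc rc : E → E) (zero one : E)
    (h : IsURP le odot imp impW lc rc zero one) :
    ∀ a b : E, (odot a b = some zero ↔ b = rc a) ∧ (odot a b = some zero ↔ a = lc b) := by
  -- zero is in the upper cone of L(a, 0)
  have hzero_mem : ∀ a : E, (zero : E) ∈ ucone le (lcone le {a, zero}) := by
    intro a w hw
    exact hw zero (by simp)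
  -- Lemma A: a ⊙ ã = 0
  have lemA : ∀ a : E, odot a (rc a) = some zero := by
    intro a
    have hdef : (odot a (rc a)).isSome := (h.odot_defined a (rc a)).mpr (h.le_refl _)
    obtain ⟨c, hc⟩ := Option.isSome_iff_exists.mp hdef
    have rhs : setLE le (lcone le (ucone le {rc a, rc a})) (ucone le (impW a zero)) := by
      intro w hw y hy
      rw [h.impW_zero] at hy
      have hy' : le (rc a) y := hy (rc a) rfl
      refine hw y ?_
      intro z hz
      rcases hz with hz | hz <;> subst hz <;> exact hy'
    have lhs := (h.adjoint_l (rc a) a zero).mpr rhs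
    have hcmem : c ∈ lcone le (odotRSet odot a (ucone le {rc a, rc a})) := by
      intro w hw
      obtain ⟨s, hs, hws⟩ := hw
      have hras : le (rc a) s := hs (rc a) (by simp)
      exact h.odot_lmono (rc a) s a c w (h.le_refl _) hras hc hws
    have hc0 : le c zero := lhs c hcmem zero (hzero_mem a)
    have : c = zero := h.le_antisymm _ _ hc0 (h.zero_le c)
    rw [hc] ; rw [this]
  -- Lemma B: a ⊙ b = 0 → b = ã
  have lemB : ∀ a b : E, odot a b = some zero → b = rc a := by
    intro a b hab
    have hdef : (odot a b).isSome := by rw [hab]; rfl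
    have hrab : le (rc a) b := (h.odot_defined a b).mp hdef
    have lhs : setLE le (lcone le (odotRSet odot a (ucone le {b, rc a})))
        (ucone le (lcone le {a, zero})) := by
      intro w hw y _
      have hbmem : b ∈ ucone le {b, rc a} := by
        intro z hz
        rcases hz with hz | hz
        · rw [hz]; exact h.le_refl b
        · rw [Set.mem_singleton_iff] at hz; rw [hz]; exact hrab
      have hw0 : le w zero := hw zero ⟨b, hbmem, hab⟩
      exact h.le_trans _ _ _ hw0 (h.zero_le y)
    have rhs := (h.adjoint_l b a zero).mp lhs
    have hbmem : b ∈ lcone le (ucone le {b, rc a}) := by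
      intro u hu
      exact hu b (by simp)
    have hrmem : rc a ∈ ucone le (impW a zero) := by
      rw [h.impW_zero]
      intro z hz
      rw [Set.mem_singleton_iff] at hz
      subst hz; exact h.le_refl _
    exact h.le_antisymm _ _ (rhs b hbmem (rc a) hrmem) hrab
  intro a b
  have h1 : odot a b = some zero ↔ b = rc a := by
    constructor
    · exact lemB a b
    · rintro rfl; exact lemA a
  refine ⟨h1, h1.trans ?_⟩
  constructor
  · rintro rfl; exact (h.lc_rc a).symm
  · rintro rfl; exact (h.rc_lc b).symm

end Paper
end

section
/- Let R = (R,≤,⊙,→,⇝,‾,˜,0,1) be an unsharp residuated poset. For every a ∈ R: U(a→a) = {1} and U(a⇝a) = {1}, i.e., 1 is the only common upper bound of the set a→a and of the set a⇝a. -/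
namespace Paper

variable {E : Type*}

/-- In an unsharp residuated poset, `U(a → a) = {1}` and `U(a ⇝ a) = {1}`. -/
theorem stmt19 (le : E → E → Prop) (odot : E → E → Option E)
    (imp impW : E → E → Set E) (lc rc : E → E) (zero one : E)
    (h : IsURP le odot imp impW lc rc zero one) :
    ∀ a : E, ucone le (imp a a) = {one} ∧ ucone le (impW a a) = {one} := by
  intro a
  have hone_mem : ∀ c : E, one ∈ lcone le (ucone le {one, c}) := by
    intro c y hy
    exact hy one (by simp)
  have hq : ∀ q ∈ ucone le (lcone le ({a, a} : Set E)), le a q := by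
    intro q hq
    refine hq a ?_
    intro y hy
    rcases hy with h' | h' <;> rw [h'] <;> exact h.le_refl a
  constructor
  · ext u
    simp only [Set.mem_singleton_iff]
    constructor
    · intro hu
      have lhs : setLE le (lcone le (odotLSet odot (ucone le {one, lc a}) a))
          (ucone le (lcone le {a, a})) := by
        intro p hp q hq'
        have ha : a ∈ odotLSet odot (ucone le {one, lc a}) a := by
          refine ⟨one, ?_, h.one_odot a⟩
          intro y hy
          rcases hy with h' | h' <;> rw [h']
          · exact h.le_refl one
          · exact h.le_one _
        exact h.le_trans _ _ _ (hp a ha) (hq q hq')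
      have key := (h.adjoint_r one a a).mp lhs
      exact h.le_antisymm u one (h.le_one u) (key one (hone_mem _) u hu)
    · rintro rfl
      intro y _
      exact h.le_one y
  · ext u
    simp only [Set.mem_singleton_iff]
    constructor
    · intro hu
      have lhs : setLE le (lcone le (odotRSet odot a (ucone le {one, rc a})))
          (ucone le (lcone le {a, a})) := by
        intro p hp q hq'
        have ha : a ∈ odotRSet odot a (ucone le {one, rc a}) := by
          refine ⟨one, ?_, h.odot_one a⟩
          intro y hy
          rcases hy with h' | h' <;> rw [h']
          · exact h.le_refl one
          · exact h.le_one _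
        exact h.le_trans _ _ _ (hp a ha) (hq q hq')
      have key := (h.adjoint_l one a a).mp lhs
      exact h.le_antisymm u one (h.le_one u) (key one (hone_mem _) u hu)
    · rintro rfl
      intro y _
      exact h.le_one y

end Paper
end
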